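/- Let G be connected with m > n (i.e. G has at least two cycles). Then the geometric multiplicity of −1 as an eigenvalue of B, i.e. dim ker(B + I), equals m − n + 1 if G is bipartite, and equals m − n if G is not bipartite. -/

import Mathlib

open Matrix Polynomial BigOperators

variable {V : Type*}

/-- The non-backtracking matrix of a graph `G`, indexed by darts (oriented edges):
`B[(k→l),(i→j)] = 1` if `j = k` and `i ≠ l`, else `0`. -/
def nbMatrix [DecidableEq V] (G : SimpleGraph V) : Matrix G.Dart G.Dart ℂ :=
  fun e f => if f.snd = e.fst ∧ f.fst ≠ e.snd then 1 else 0

/-- `G` is bipartite: the vertex set can be partitioned into two sets such that every edge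
joins a vertex of one set to a vertex of the other. -/
def IsBipartite (G : SimpleGraph V) : Prop :=
  ∃ S : Set V, ∀ a b : V, G.Adj a b → ((a ∈ S ∧ b ∉ S) ∨ (a ∉ S ∧ b ∈ S))

/-!
Write `S x u` for the sum of `x` over the darts entering `u`. Then
`((B + 1) x) e = x e - x e.symm + S x e.fst`, so for `x ∈ ker (B + 1)` the equations at `e` and
`e.symm` give `S x a + S x b = 0` along every edge, and on a connected graph `(S x u) ^ 2` is a
constant `c`. Multiplying the equation at `e` by `S x e.fst` and summing over all darts gives
`2 (m - n) c = 0`, so `S x = 0` when `m ≠ n`, and then `x` is symmetric. Hence `ker (B + 1)` is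
the space of edge functions in the kernel of the unsigned vertex-edge incidence matrix `N`, of
dimension `m - n + dim ker Nᵀ` since `rank Nᵀ = rank N`. Finally `ker Nᵀ` consists of the
functions with `g a + g b = 0` along every edge: on a connected graph it is spanned by the `±1`
sign of a bipartition if there is one, and is zero otherwise.
-/

theorem Matrix.finrank_ker_mulVecLin_add_card {m n K : Type*} [Fintype m] [Fintype n]
    [Field K] (A : Matrix m n K) :
    Module.finrank K (LinearMap.ker A.mulVecLin) + Fintype.card m =
      Fintype.card n + Module.finrank K (LinearMap.ker Aᵀ.mulVecLin) := by
  have hA := LinearMap.finrank_range_add_finrank_ker A.mulVecLin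
  have hAt := LinearMap.finrank_range_add_finrank_ker Aᵀ.mulVecLin
  have hrank : Aᵀ.rank = A.rank := rank_transpose A
  simp only [Module.finrank_fintype_fun_eq_card] at hA hAt
  rw [Matrix.rank, Matrix.rank] at hrank
  omega

namespace SimpleGraph

variable {G : SimpleGraph V}

theorem Reachable.eq_or_eq_neg_of_forall_adj_add_eq_zero {A : Type*} [AddCommGroup A]
    {g : V → A} (hg : ∀ a b, G.Adj a b → g a + g b = 0) {u v : V} (h : G.Reachable u v) :
    g v = g u ∨ g v = -g u := by
  obtain ⟨p⟩ := h
  induction p with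
  | nil => exact .inl rfl
  | cons hadj _ ih =>
    rw [eq_neg_of_add_eq_zero_right (hg _ _ hadj), neg_neg] at ih
    exact ih.symm

theorem Connected.eq_zero_of_forall_adj_add_eq_zero {A : Type*} [AddCommGroup A] {g : V → A}
    (hG : G.Connected) (hg : ∀ a b, G.Adj a b → g a + g b = 0) {u : V} (hu : g u = 0) :
    g = 0 := by
  funext v
  rcases (hG u v).eq_or_eq_neg_of_forall_adj_add_eq_zero hg with h | h <;> simp [h, hu]

theorem Connected.sq_eq_sq_of_forall_adj_add_eq_zero {R : Type*} [CommRing R] {g : V → R}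
    (hG : G.Connected) (hg : ∀ a b, G.Adj a b → g a + g b = 0) (u v : V) :
    g v ^ 2 = g u ^ 2 := by
  rcases (hG u v).eq_or_eq_neg_of_forall_adj_add_eq_zero hg with h | h <;> simp [h]

theorem Connected.isBipartite_of_forall_adj_add_eq_zero {K : Type*} [Field K] [NeZero (2 : K)]
    {g : V → K} (hG : G.Connected) (hg : ∀ a b, G.Adj a b → g a + g b = 0) (hne : g ≠ 0) :
    _root_.IsBipartite G := by
  obtain ⟨u, hu⟩ := Function.ne_iff.mp hne
  have hneg : -g u ≠ g u := fun h => mul_ne_zero two_ne_zero hu (by linear_combination -h)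
  refine ⟨{v | g v = g u}, fun a b hab => ?_⟩
  have hb : g b = -g a := eq_neg_of_add_eq_zero_right (hg a b hab)
  simp only [Set.mem_ofPred_eq, hb]
  rcases (hG u a).eq_or_eq_neg_of_forall_adj_add_eq_zero hg with h | h <;> simp [h, hneg]

def Dart.toEdgeSet (d : G.Dart) : G.edgeSet :=
  ⟨d.edge, d.edge_mem⟩

theorem Dart.toEdgeSet_surjective :
    Function.Surjective (Dart.toEdgeSet : G.Dart → G.edgeSet) := by
  rintro ⟨e, he⟩
  induction e using Sym2.ind with
  | _ a b => exact ⟨⟨(a, b), he⟩, rfl⟩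

theorem Dart.toEdgeSet_eq_iff (d₁ d₂ : G.Dart) :
    d₁.toEdgeSet = d₂.toEdgeSet ↔ d₁ = d₂ ∨ d₁ = d₂.symm :=
  Subtype.ext_iff.trans (dart_edge_eq_iff d₁ d₂)

@[simp]
theorem Dart.toEdgeSet_symm (d : G.Dart) : d.symm.toEdgeSet = d.toEdgeSet :=
  Subtype.ext d.edge_symm

theorem exists_eq_comp_toEdgeSet {M : Type*} {x : G.Dart → M} (hx : ∀ d, x d.symm = x d) :
    ∃ z : G.edgeSet → M, x = z ∘ Dart.toEdgeSet := by
  refine ⟨x ∘ Function.surjInv Dart.toEdgeSet_surjective, funext fun d => ?_⟩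
  have h := Function.surjInv_eq Dart.toEdgeSet_surjective d.toEdgeSet
  rcases (Dart.toEdgeSet_eq_iff _ _).mp h with h' | h' <;> simp only [Function.comp_apply, h', hx]

section IncidenceMatrix

variable [DecidableEq V] [DecidableRel G.Adj]

def edgeIncMatrix (R : Type*) [Zero R] [One R] : Matrix V G.edgeSet R :=
  (G.incMatrix R).submatrix id (↑)

variable {R : Type*}

theorem edgeIncMatrix_apply [Zero R] [One R] (u : V) (e : G.edgeSet) :
    G.edgeIncMatrix R u e = if u ∈ (e : Sym2 V) then 1 else 0 := by
  simp only [edgeIncMatrix, submatrix_apply, id, incMatrix_apply', edge_mem_incidenceSet_iff]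

variable [Fintype V]

theorem edgeIncMatrix_mulVec_apply [NonAssocSemiring R] (z : G.edgeSet → R) (u : V) :
    (G.edgeIncMatrix R *ᵥ z) u = ∑ e : G.edgeSet with u ∈ e.1, z e := by
  simp [mulVec, dotProduct, edgeIncMatrix_apply, Finset.sum_filter]

theorem edgeIncMatrix_transpose_mulVec_apply_edge [NonAssocSemiring R] (g : V → R)
    (d : G.Dart) : ((G.edgeIncMatrix R)ᵀ *ᵥ g) d.toEdgeSet = g d.fst + g d.snd := by
  have hfilter : ({u | u ∈ (d.toEdgeSet : Sym2 V)} : Finset V) = {d.fst, d.snd} := by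
    ext; simp [Dart.toEdgeSet, Dart.edge]
  simp only [mulVec, dotProduct, transpose_apply, edgeIncMatrix_apply, ite_mul, one_mul,
    zero_mul]
  rw [← Finset.sum_filter, hfilter, Finset.sum_pair d.fst_ne_snd]

theorem mem_ker_edgeIncMatrix_transpose_iff [CommSemiring R] (g : V → R) :
    g ∈ LinearMap.ker (G.edgeIncMatrix R)ᵀ.mulVecLin ↔
      ∀ a b, G.Adj a b → g a + g b = 0 := by
  simp only [LinearMap.mem_ker, mulVecLin_apply, funext_iff, Dart.toEdgeSet_surjective.forall,
    edgeIncMatrix_transpose_mulVec_apply_edge, Pi.zero_apply]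
  exact ⟨fun h a b hab => h ⟨(a, b), hab⟩, fun h d => h _ _ d.adj⟩

theorem ker_edgeIncMatrix_transpose_eq_bot {K : Type*} [Field K] [NeZero (2 : K)]
    (hG : G.Connected) (hG' : ¬ _root_.IsBipartite G) :
    LinearMap.ker (G.edgeIncMatrix K)ᵀ.mulVecLin = ⊥ := by
  refine (Submodule.eq_bot_iff _).mpr fun g hg => ?_
  rw [mem_ker_edgeIncMatrix_transpose_iff] at hg
  by_contra hne
  exact hG' (hG.isBipartite_of_forall_adj_add_eq_zero hg hne)

theorem finrank_ker_edgeIncMatrix_transpose_of_isBipartite {K : Type*} [Field K]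
    (hG : G.Connected) (hG' : _root_.IsBipartite G) :
    Module.finrank K (LinearMap.ker (G.edgeIncMatrix K)ᵀ.mulVecLin) = 1 := by
  classical
  obtain ⟨S, hS⟩ := hG'
  obtain ⟨u⟩ := hG.nonempty
  let ε : V → K := fun v => if v ∈ S then 1 else -1
  have hε : ∀ a b, G.Adj a b → ε a + ε b = 0 := by
    intro a b hab
    rcases hS a b hab with ⟨ha, hb⟩ | ⟨ha, hb⟩ <;> simp [ε, ha, hb]
  have hεu : ε u * ε u = 1 := by by_cases hu : u ∈ S <;> simp [ε, hu]
  have hker : LinearMap.ker (G.edgeIncMatrix K)ᵀ.mulVecLin = K ∙ ε := by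
    refine le_antisymm (fun g hg => ?_)
      ((Submodule.span_singleton_le_iff_mem _ _).mpr
        ((mem_ker_edgeIncMatrix_transpose_iff ε).mpr hε))
    rw [mem_ker_edgeIncMatrix_transpose_iff] at hg
    have : g - (g u * ε u) • ε = 0 := by
      refine hG.eq_zero_of_forall_adj_add_eq_zero (u := u) (fun a b hab => ?_) ?_
      · simp only [Pi.sub_apply, Pi.smul_apply, smul_eq_mul]
        linear_combination hg a b hab - (g u * ε u) * hε a b hab
      · simp only [Pi.sub_apply, Pi.smul_apply, smul_eq_mul]
        linear_combination -g u * hεu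
    exact Submodule.mem_span_singleton.mpr ⟨_, (sub_eq_zero.mp this).symm⟩
  rw [hker, finrank_span_singleton]
  intro h
  simp [h] at hεu

end IncidenceMatrix

section Darts

variable [Fintype V] [DecidableEq V] [DecidableRel G.Adj] {R : Type*}

def inflow {M : Type*} [AddCommMonoid M] (x : G.Dart → M) (u : V) : M :=
  ∑ d with d.snd = u, x d

theorem sum_mul_inflow [NonUnitalNonAssocSemiring R] (φ : V → R) (x : G.Dart → R) :
    ∑ u, φ u * inflow x u = ∑ d, φ d.snd * x d := by
  rw [← Finset.sum_fiberwise Finset.univ (fun d : G.Dart => d.snd)]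
  refine Finset.sum_congr rfl fun u _ => ?_
  rw [inflow, Finset.mul_sum]
  exact Finset.sum_congr rfl fun d hd => by rw [(Finset.mem_filter.mp hd).2]

theorem inflow_comp_toEdgeSet [NonAssocSemiring R] (z : G.edgeSet → R) (u : V) :
    inflow (z ∘ Dart.toEdgeSet) u = (G.edgeIncMatrix R *ᵥ z) u := by
  rw [edgeIncMatrix_mulVec_apply, inflow]
  refine Finset.sum_bij (fun d _ => d.toEdgeSet) ?_ ?_ ?_ fun _ _ => rfl
  · intro d hd
    simp only [Finset.mem_filter, Finset.mem_univ, true_and] at hd ⊢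
    exact hd ▸ Sym2.mem_mk_right _ _
  · intro d₁ hd₁ d₂ hd₂ h
    simp only [Finset.mem_filter, Finset.mem_univ, true_and] at hd₁ hd₂
    refine ((Dart.toEdgeSet_eq_iff _ _).mp h).resolve_right fun h' => ?_
    exact d₂.fst_ne_snd (by rw [hd₂, ← hd₁, h']; rfl)
  · rintro ⟨e, he⟩ hu
    simp only [Finset.mem_filter, Finset.mem_univ, true_and] at hu
    induction e using Sym2.ind with
    | _ a b =>
      rcases Sym2.mem_iff.mp hu with rfl | rfl
      · exact ⟨⟨(b, u), G.adj_symm he⟩, by simp, Subtype.ext Sym2.eq_swap⟩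
      · exact ⟨⟨(a, u), he⟩, by simp, rfl⟩

end Darts

end SimpleGraph

section NonBacktracking

open SimpleGraph (Dart inflow edgeIncMatrix sum_mul_inflow inflow_comp_toEdgeSet)

variable [Fintype V] [DecidableEq V] {G : SimpleGraph V} [DecidableRel G.Adj]

theorem nbMatrix_mulVec_apply (x : G.Dart → ℂ) (e : G.Dart) :
    (nbMatrix G *ᵥ x) e = inflow x e.fst - x e.symm := by
  have hfilter : ({f | f.snd = e.fst ∧ f.fst ≠ e.snd} : Finset G.Dart) =
      ({f | f.snd = e.fst} : Finset G.Dart).erase e.symm := by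
    ext f
    simp only [Finset.mem_filter, Finset.mem_univ, true_and, Finset.mem_erase, ne_eq,
      Dart.ext_iff, Prod.ext_iff, Dart.symm_toProd, Prod.fst_swap, Prod.snd_swap]
    tauto
  simp only [mulVec, dotProduct, nbMatrix, ite_mul, one_mul, zero_mul]
  rw [← Finset.sum_filter, hfilter, Finset.sum_erase_eq_sub (by simp), inflow]

theorem mem_ker_nbMatrix_add_one_iff (x : G.Dart → ℂ) :
    x ∈ LinearMap.ker (nbMatrix G + 1).mulVecLin ↔
      ∀ e, x e - x e.symm + inflow x e.fst = 0 := by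
  simp only [LinearMap.mem_ker, mulVecLin_apply, funext_iff, add_mulVec, one_mulVec,
    Pi.add_apply, nbMatrix_mulVec_apply, Pi.zero_apply]
  exact forall_congr' fun e => by ring_nf

theorem inflow_add_inflow_of_mem_ker {x : G.Dart → ℂ}
    (hx : x ∈ LinearMap.ker (nbMatrix G + 1).mulVecLin) {a b : V} (hab : G.Adj a b) :
    inflow x a + inflow x b = 0 := by
  rw [mem_ker_nbMatrix_add_one_iff] at hx
  let d : G.Dart := ⟨(a, b), hab⟩
  have hd : x d - x d.symm + inflow x a = 0 := hx d
  have hd' : x d.symm - x d + inflow x b = 0 := by simpa using hx d.symm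
  linear_combination hd + hd'

theorem inflow_eq_zero_of_mem_ker (hG : G.Connected)
    (hcard : Fintype.card V ≠ G.edgeFinset.card) {x : G.Dart → ℂ}
    (hx : x ∈ LinearMap.ker (nbMatrix G + 1).mulVecLin) : inflow x = 0 := by
  obtain ⟨u⟩ := hG.nonempty
  set S := inflow x
  have hS : ∀ a b, G.Adj a b → S a + S b = 0 := fun a b => inflow_add_inflow_of_mem_ker hx
  have hsq : ∀ v, S v ^ 2 = S u ^ 2 := hG.sq_eq_sq_of_forall_adj_add_eq_zero hS u
  rw [mem_ker_nbMatrix_add_one_iff] at hx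
  have hsnd : ∑ e : G.Dart, S e.snd * x e = Fintype.card V * S u ^ 2 := by
    simp [← sum_mul_inflow, ← sq, hsq, S]
  have hfst : ∑ e : G.Dart, S e.fst * x e = -∑ e : G.Dart, S e.snd * x e := by
    rw [← Finset.sum_neg_distrib]
    refine Finset.sum_congr rfl fun e _ => ?_
    linear_combination x e * hS _ _ e.adj
  have hsymm : ∑ e : G.Dart, S e.fst * x e.symm = ∑ e : G.Dart, S e.snd * x e :=
    Equiv.sum_comp (Dart.symm_involutive.toPerm _) fun e => S e.snd * x e
  have hfstfst : ∑ e : G.Dart, S e.fst * S e.fst = 2 * G.edgeFinset.card * S u ^ 2 := by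
    simp [← sq, hsq, G.dart_card_eq_twice_card_edges]
  have hsum : ∑ e : G.Dart, S e.fst * (x e - x e.symm + S e.fst) = 0 :=
    Finset.sum_eq_zero fun e _ => by rw [hx e, mul_zero]
  simp only [mul_add, mul_sub, Finset.sum_add_distrib, Finset.sum_sub_distrib] at hsum
  have hSu : (2 * ((G.edgeFinset.card : ℂ) - Fintype.card V)) * S u ^ 2 = 0 := by
    linear_combination hsum - hfst + hsymm - hfstfst + 2 * hsnd
  have hne : (2 * ((G.edgeFinset.card : ℂ) - Fintype.card V)) ≠ 0 := by
    rw [mul_ne_zero_iff, sub_ne_zero]; exact ⟨two_ne_zero, by exact_mod_cast hcard.symm⟩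
  funext v
  exact pow_eq_zero_iff two_ne_zero |>.mp ((hsq v).trans ((mul_eq_zero.mp hSu).resolve_left hne))

theorem ker_nbMatrix_add_one_eq_map (hG : G.Connected)
    (hcard : Fintype.card V ≠ G.edgeFinset.card) :
    LinearMap.ker (nbMatrix G + 1).mulVecLin =
      (LinearMap.ker (G.edgeIncMatrix ℂ).mulVecLin).map
        (LinearMap.funLeft ℂ ℂ Dart.toEdgeSet) := by
  ext x
  rw [Submodule.mem_map]
  constructor
  · intro hx
    have hS := inflow_eq_zero_of_mem_ker hG hcard hx
    simp only [mem_ker_nbMatrix_add_one_iff, hS, Pi.zero_apply, add_zero] at hx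
    obtain ⟨z, rfl⟩ := G.exists_eq_comp_toEdgeSet fun d => by linear_combination -hx d
    refine ⟨z, LinearMap.mem_ker.mpr (funext fun u => ?_), rfl⟩
    rw [mulVecLin_apply, ← inflow_comp_toEdgeSet, hS, Pi.zero_apply]
  · rintro ⟨z, hz, rfl⟩
    rw [show LinearMap.funLeft ℂ ℂ Dart.toEdgeSet z = z ∘ Dart.toEdgeSet from rfl,
      mem_ker_nbMatrix_add_one_iff]
    intro e
    have hze : (G.edgeIncMatrix ℂ *ᵥ z) e.fst = 0 := congrFun (LinearMap.mem_ker.mp hz) e.fst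
    simp [inflow_comp_toEdgeSet, hze]

theorem finrank_ker_nbMatrix_add_one (hG : G.Connected)
    (hcard : Fintype.card V ≠ G.edgeFinset.card) :
    Module.finrank ℂ (LinearMap.ker (nbMatrix G + 1).mulVecLin) =
      Module.finrank ℂ (LinearMap.ker (G.edgeIncMatrix ℂ).mulVecLin) := by
  rw [ker_nbMatrix_add_one_eq_map hG hcard]
  exact (Submodule.equivMapOfInjective _ (LinearMap.funLeft_injective_of_surjective _ _ _
    Dart.toEdgeSet_surjective) _).finrank_eq.symm

end NonBacktracking

/-- For a connected graph with `m > n`, the geometric multiplicity of `−1`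
as an eigenvalue of `B`, i.e. `dim ker(B + I)`, is `m − n + 1` if `G` is bipartite, and
`m − n` otherwise. -/
theorem nbMatrix_geometric_multiplicity_neg_one
    [DecidableEq V] [Fintype V] (G : SimpleGraph V) [DecidableRel G.Adj]
    (hconn : G.Connected) (hm : Fintype.card V < G.edgeFinset.card) :
    (IsBipartite G →
      Module.finrank ℂ ↥(LinearMap.ker (nbMatrix G + 1).mulVecLin)
        = G.edgeFinset.card - Fintype.card V + 1) ∧
    (¬ IsBipartite G →
      Module.finrank ℂ ↥(LinearMap.ker (nbMatrix G + 1).mulVecLin)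
        = G.edgeFinset.card - Fintype.card V) := by
  have hdim := (G.edgeIncMatrix ℂ).finrank_ker_mulVecLin_add_card
  rw [← finrank_ker_nbMatrix_add_one hconn hm.ne, ← SimpleGraph.edgeFinset_card] at hdim
  refine ⟨fun hbip => ?_, fun hbip => ?_⟩
  · rw [G.finrank_ker_edgeIncMatrix_transpose_of_isBipartite hconn hbip] at hdim
    omega
  · rw [G.ker_edgeIncMatrix_transpose_eq_bot hconn hbip, finrank_bot] at hdim
    omega
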